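/- Let ξ₁,…,ξ_k be finite point patterns on a metric space, C > 0, p ≥ 1, and consider minimizing the Fréchet functional F(ζ) = Σ_{j=1}^k τ_{C,p}(ξⱼ, ζ)^p over finite point patterns ζ, where τ is the TT-metric. If ζ is a pattern in which some point z ∈ ζ is matched (in the optimal matchings realizing τ(ξⱼ,ζ) for each j) with at most ⌊k/2⌋ data points located in X, then removing z from ζ does not increase F. Consequently, there exists a minimizer ζ* of F with cardinality at most ⌊(2/(k+1))·Σ_{j=1}^k |ξⱼ|⌋. -/

import Mathlib

/-!
Deleting a point `z` of `ζ` changes each `τ(ξⱼ, ζ)^p` by at most `C^p`: if some copy of `z` is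
left unmatched by an optimal matching, the same matching is admissible for `ζ.erase z` and one
unmatched penalty disappears; otherwise dropping one matched pair at `z` trades its transport cost
for two penalties while one penalty disappears. So if for at most half of the patterns every copy
of `z` is matched, deleting `z` does not increase `F`. In a minimizer of least cardinality every
point is therefore fully matched for more than `k/2` of the patterns, and double counting the
matched pairs gives `(k + 1)·|ζ| ≤ 2·Σⱼ |ξⱼ|`.
-/

/-- `p`-th power of the transport-transform distance between finite point patterns. -/
noncomputable def ttP {X : Type*} [MetricSpace X] (C p : ℝ) (ξ η : Multiset X) : ℝ :=
  sInf { c : ℝ | ∃ γ : Multiset (X × X),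
    γ.map Prod.fst ≤ ξ ∧ γ.map Prod.snd ≤ η ∧
    c = ((Multiset.card ξ : ℝ) + Multiset.card η - 2 * Multiset.card γ) * C ^ p
        + (γ.map (fun z => dist z.1 z.2 ^ p)).sum }

namespace Multiset

variable {α : Type*} [DecidableEq α]

theorem le_card_nsmul_of_forall_mem {s t : Multiset α} (h : ∀ a ∈ s, a ∈ t) :
    s ≤ card s • t := by
  refine le_iff_count.2 fun a => ?_
  rw [count_nsmul]
  by_cases ha : a ∈ s
  · exact (count_le_card a s).trans (Nat.le_mul_of_pos_right _ (count_pos.2 (h a ha)))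
  · simp [count_eq_zero.2 ha]

theorem le_erase_of_count_lt {s t : Multiset α} {a : α} (hst : s ≤ t)
    (ha : count a s < count a t) : s ≤ t.erase a := by
  refine le_iff_count.2 fun b => ?_
  rcases eq_or_ne b a with rfl | hb
  · rw [count_erase_self]
    omega
  · rw [count_erase_of_ne hb]
    exact count_le_of_le b hst

end Multiset

theorem Finset.sum_le_sum_of_le_add_of_le_sub {ι : Type*} [Fintype ι] {f g : ι → ℝ} {P : ℝ}
    (hP : 0 ≤ P) (s : Finset ι) (hs : 2 * s.card ≤ Fintype.card ι)
    (hin : ∀ j ∈ s, f j ≤ g j + P) (hout : ∀ j ∉ s, f j ≤ g j - P) :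
    ∑ j, f j ≤ ∑ j, g j := by
  classical
  have hcompl : (s.card : ℝ) ≤ sᶜ.card := by
    rw [Finset.card_compl]
    exact_mod_cast (by omega : s.card ≤ Fintype.card ι - s.card)
  calc ∑ j, f j = ∑ j ∈ s, f j + ∑ j ∈ sᶜ, f j := (s.sum_add_sum_compl f).symm
    _ ≤ ∑ j ∈ s, (g j + P) + ∑ j ∈ sᶜ, (g j - P) :=
      add_le_add (Finset.sum_le_sum hin)
        (Finset.sum_le_sum fun j hj => hout j (Finset.mem_compl.1 hj))
    _ = ∑ j, g j + (s.card - sᶜ.card) * P := by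
      rw [Finset.sum_add_distrib, Finset.sum_sub_distrib, ← s.sum_add_sum_compl g]
      simp only [Finset.sum_const, nsmul_eq_mul]
      ring
    _ ≤ ∑ j, g j := by nlinarith

namespace TTMetric

open Multiset

variable {X : Type*}

def partialMatchings (ξ η : Multiset X) : Set (Multiset (X × X)) :=
  {γ | γ.map Prod.fst ≤ ξ ∧ γ.map Prod.snd ≤ η}

theorem card_le_of_mem_partialMatchings {ξ η : Multiset X} {γ : Multiset (X × X)}
    (hγ : γ ∈ partialMatchings ξ η) : card γ ≤ card ξ := by
  simpa using card_le_card hγ.1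

theorem partialMatchings_finite (ξ η : Multiset X) : (partialMatchings ξ η).Finite := by
  classical
  refine (Set.finite_Iic (card ξ • ξ ×ˢ η)).subset fun γ hγ => ?_
  have hmem : ∀ w ∈ γ, w ∈ ξ ×ˢ η := fun w hw =>
    mem_product.2 ⟨mem_of_le hγ.1 (mem_map_of_mem _ hw), mem_of_le hγ.2 (mem_map_of_mem _ hw)⟩
  exact (le_card_nsmul_of_forall_mem hmem).trans
    (nsmul_le_nsmul_left (zero_le _) (card_le_of_mem_partialMatchings hγ))

section

variable [DecidableEq X] {ι : Type*} [Fintype ι]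

def fullyMatched (γ : ι → Multiset (X × X)) (ζ : Multiset X) (z : X) : Finset ι :=
  Finset.univ.filter fun j => count z ((γ j).map Prod.snd) = count z ζ

theorem card_mul_le_of_majority_fullyMatched {ξ : ι → Multiset X} {ζ : Multiset X}
    {γ : ι → Multiset (X × X)} (hγ : ∀ j, γ j ∈ partialMatchings (ξ j) ζ)
    (hmajority : ∀ z ∈ ζ, Fintype.card ι < 2 * (fullyMatched γ ζ z).card) :
    card ζ * (Fintype.card ι + 1) ≤ 2 * ∑ j, card (ξ j) := by
  classical
  have hpattern : ∀ j,
      ∑ z ∈ ζ.toFinset, (if j ∈ fullyMatched γ ζ z then count z ζ else 0)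
        ≤ card (ξ j) :=
    fun j => calc
      _ ≤ ∑ z ∈ ζ.toFinset, count z ((γ j).map Prod.snd) :=
        Finset.sum_le_sum fun z _ => by
          split_ifs with h
          · exact ((Finset.mem_filter.1 h).2).ge
          · exact Nat.zero_le _
      _ = card (γ j) := by
        rw [sum_count_eq_card fun z hz => mem_toFinset.2 (mem_of_le (hγ j).2 hz), card_map]
      _ ≤ card (ξ j) := card_le_of_mem_partialMatchings (hγ j)
  calc card ζ * (Fintype.card ι + 1)
      = ∑ z ∈ ζ.toFinset, count z ζ * (Fintype.card ι + 1) := by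
        rw [← Finset.sum_mul, toFinset_sum_count_eq]
    _ ≤ ∑ z ∈ ζ.toFinset, 2 * ((fullyMatched γ ζ z).card * count z ζ) :=
        Finset.sum_le_sum fun z hz => by nlinarith [hmajority z (mem_toFinset.1 hz)]
    _ = 2 * ∑ j, ∑ z ∈ ζ.toFinset,
          (if j ∈ fullyMatched γ ζ z then count z ζ else 0) := by
        rw [← Finset.mul_sum, Finset.sum_comm]
        refine congrArg (2 * ·) (Finset.sum_congr rfl fun z _ => ?_)
        rw [Finset.sum_ite_mem, Finset.univ_inter, Finset.sum_const, smul_eq_mul]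
    _ ≤ 2 * ∑ j, card (ξ j) := Nat.mul_le_mul_left _ (Finset.sum_le_sum fun j _ => hpattern j)

end

variable [MetricSpace X]

noncomputable def matchingCost (C p : ℝ) (ξ η : Multiset X) (γ : Multiset (X × X)) : ℝ :=
  ((card ξ : ℝ) + card η - 2 * card γ) * C ^ p + (γ.map (fun z => dist z.1 z.2 ^ p)).sum

theorem ttP_eq_sInf_image (C p : ℝ) (ξ η : Multiset X) :
    ttP C p ξ η = sInf (matchingCost C p ξ η '' partialMatchings ξ η) := by
  unfold ttP
  congr 1
  ext c
  constructor
  · rintro ⟨γ, h₁, h₂, rfl⟩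
    exact ⟨γ, ⟨h₁, h₂⟩, rfl⟩
  · rintro ⟨γ, ⟨h₁, h₂⟩, rfl⟩
    exact ⟨γ, h₁, h₂, rfl⟩

theorem ttP_le_matchingCost (C p : ℝ) {ξ η : Multiset X} {γ : Multiset (X × X)}
    (hγ : γ ∈ partialMatchings ξ η) : ttP C p ξ η ≤ matchingCost C p ξ η γ := by
  rw [ttP_eq_sInf_image]
  exact csInf_le (((partialMatchings_finite ξ η).image _).bddBelow) ⟨γ, hγ, rfl⟩

theorem exists_matchingCost_eq_ttP (C p : ℝ) (ξ η : Multiset X) :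
    ∃ γ ∈ partialMatchings ξ η, matchingCost C p ξ η γ = ttP C p ξ η := by
  obtain ⟨γ, hγ, hleast⟩ := Set.exists_min_image (partialMatchings ξ η)
    (matchingCost C p ξ η) (partialMatchings_finite ξ η) ⟨0, by simp [partialMatchings]⟩
  have hγleast : IsLeast (matchingCost C p ξ η '' partialMatchings ξ η)
      (matchingCost C p ξ η γ) :=
    ⟨⟨γ, hγ, rfl⟩, by rintro _ ⟨δ, hδ, rfl⟩; exact hleast δ hδ⟩
  exact ⟨γ, hγ, by rw [ttP_eq_sInf_image, hγleast.csInf_eq]⟩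

variable [DecidableEq X]

theorem ttP_erase_le_sub (C p : ℝ) {ξ ζ : Multiset X} {z : X} {γ : Multiset (X × X)}
    (hγ : γ ∈ partialMatchings ξ ζ) (hz : count z (γ.map Prod.snd) < count z ζ) :
    ttP C p ξ (ζ.erase z) ≤ matchingCost C p ξ ζ γ - C ^ p := by
  have hγ' : γ ∈ partialMatchings ξ (ζ.erase z) := ⟨hγ.1, le_erase_of_count_lt hγ.2 hz⟩
  have hcard : (card (ζ.erase z) : ℝ) + 1 = card ζ := by
    exact_mod_cast card_erase_add_one (count_pos.1 (by omega))
  refine (ttP_le_matchingCost C p hγ').trans_eq ?_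
  unfold matchingCost
  linear_combination (C ^ p) * hcard

theorem ttP_erase_le_add {C : ℝ} (hC : 0 ≤ C) (p : ℝ) {ξ ζ : Multiset X} {z : X}
    {γ : Multiset (X × X)} (hγ : γ ∈ partialMatchings ξ ζ) (hz : z ∈ γ.map Prod.snd) :
    ttP C p ξ (ζ.erase z) ≤ matchingCost C p ξ ζ γ + C ^ p := by
  obtain ⟨w, hw, rfl⟩ := mem_map.1 hz
  obtain ⟨δ, rfl⟩ := exists_cons_of_mem hw
  have hδ : δ ∈ partialMatchings ξ (ζ.erase w.2) := by
    refine ⟨(map_le_map (le_cons_self δ w)).trans hγ.1, ?_⟩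
    simpa using erase_le_erase w.2 hγ.2
  have hcard : (card (ζ.erase w.2) : ℝ) + 1 = card ζ := by
    exact_mod_cast card_erase_add_one (mem_of_le hγ.2 hz)
  have hd : 0 ≤ dist w.1 w.2 ^ p := Real.rpow_nonneg dist_nonneg p
  have hCp : 0 ≤ C ^ p := Real.rpow_nonneg hC p
  refine (ttP_le_matchingCost C p hδ).trans ?_
  simp only [matchingCost, card_cons, map_cons, sum_cons, Nat.cast_add, Nat.cast_one]
  nlinarith

variable {ι : Type*} [Fintype ι]

theorem sum_ttP_erase_le {C : ℝ} (hC : 0 ≤ C) (p : ℝ) {ξ : ι → Multiset X}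
    {ζ : Multiset X} {z : X} (hz : z ∈ ζ) {γ : ι → Multiset (X × X)}
    (hγ : ∀ j, γ j ∈ partialMatchings (ξ j) ζ)
    (hopt : ∀ j, matchingCost C p (ξ j) ζ (γ j) = ttP C p (ξ j) ζ)
    (hminority : 2 * (fullyMatched γ ζ z).card ≤ Fintype.card ι) :
    ∑ j, ttP C p (ξ j) (ζ.erase z) ≤ ∑ j, ttP C p (ξ j) ζ := by
  refine Finset.sum_le_sum_of_le_add_of_le_sub (Real.rpow_nonneg hC p) _ hminority
    (fun j hj => ?_) (fun j hj => ?_)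
  · have hmem : z ∈ (γ j).map Prod.snd := by
      rw [← count_pos, (Finset.mem_filter.1 hj).2]
      exact count_pos.2 hz
    exact hopt j ▸ ttP_erase_le_add hC p (hγ j) hmem
  · have hlt : count z ((γ j).map Prod.snd) < count z ζ :=
      lt_of_le_of_ne (count_le_of_le z (hγ j).2) fun h => hj (Finset.mem_filter.2 ⟨by simp, h⟩)
    exact hopt j ▸ ttP_erase_le_sub C p (hγ j) hlt

theorem exists_minimizer_card_mul_le {C : ℝ} (hC : 0 ≤ C) (p : ℝ) (ξ : ι → Multiset X)
    (h : ∃ ζ₀ : Multiset X, ∀ ζ, ∑ j, ttP C p (ξ j) ζ₀ ≤ ∑ j, ttP C p (ξ j) ζ) :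
    ∃ ζs : Multiset X, (∀ ζ, ∑ j, ttP C p (ξ j) ζs ≤ ∑ j, ttP C p (ξ j) ζ) ∧
      card ζs * (Fintype.card ι + 1) ≤ 2 * ∑ j, card (ξ j) := by
  obtain ⟨ζ, hmin, hleast⟩ := (measure (card : Multiset X → ℕ)).wf.has_min _ h
  choose γ hγ hopt using fun j => exists_matchingCost_eq_ttP C p (ξ j) ζ
  refine ⟨ζ, hmin, card_mul_le_of_majority_fullyMatched hγ fun z hz => ?_⟩
  by_contra! hsparse
  have herase := sum_ttP_erase_le hC p hz hγ hopt hsparse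
  exact hleast (ζ.erase z) (fun ζ' => herase.trans (hmin ζ')) (card_erase_lt_of_mem hz)

end TTMetric

open TTMetric in
open Classical in
theorem stmt11_general {X : Type*} [MetricSpace X] [DecidableEq X] (C p : ℝ) (hC : 0 < C)
    (k : ℕ) (ξ : Fin k → Multiset X) :
    (∀ (ζ : Multiset X) (z : X), z ∈ ζ →
      ∀ γ : Fin k → Multiset (X × X),
      (∀ j, (γ j).map Prod.fst ≤ ξ j ∧ (γ j).map Prod.snd ≤ ζ ∧
        ((Multiset.card (ξ j) : ℝ) + Multiset.card ζ - 2 * Multiset.card (γ j)) * C ^ p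
          + ((γ j).map (fun w => dist w.1 w.2 ^ p)).sum = ttP C p (ξ j) ζ) →
      (Finset.univ.filter (fun j => z ∈ (γ j).map Prod.snd)).card ≤ k / 2 →
      ∑ j, ttP C p (ξ j) (ζ.erase z) ≤ ∑ j, ttP C p (ξ j) ζ) ∧
    ((∃ ζ₀ : Multiset X, ∀ ζ, ∑ j, ttP C p (ξ j) ζ₀ ≤ ∑ j, ttP C p (ξ j) ζ) →
      ∃ ζs : Multiset X, (∀ ζ, ∑ j, ttP C p (ξ j) ζs ≤ ∑ j, ttP C p (ξ j) ζ) ∧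
        Multiset.card ζs ≤ (2 * ∑ j, Multiset.card (ξ j)) / (k + 1)) := by
  constructor
  · intro ζ z hz γ hγ hmatched
    have hfull : (fullyMatched γ ζ z).card ≤ k / 2 := by
      refine (Finset.card_le_card (Finset.monotone_filter_right _ fun j _ h => ?_)).trans hmatched
      exact Multiset.count_pos.1 (h ▸ Multiset.count_pos.2 hz)
    exact sum_ttP_erase_le hC.le p hz (fun j => ⟨(hγ j).1, (hγ j).2.1⟩) (fun j => (hγ j).2.2)
      (by simp only [Fintype.card_fin]; omega)
  · intro hmin
    obtain ⟨ζs, hζs, hcard⟩ := exists_minimizer_card_mul_le hC.le p ξ hmin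
    rw [Fintype.card_fin] at hcard
    exact ⟨ζs, hζs, (Nat.le_div_iff_mul_le k.succ_pos).2 hcard⟩

open Classical in
/-- In the Fréchet functional `F(ζ) = Σⱼ τ(ξⱼ,ζ)^p`: a center point matched (in optimal
matchings) with at most `⌊k/2⌋` data points can be removed without increasing `F`;
consequently some minimizer has at most `⌊2/(k+1)·Σⱼ|ξⱼ|⌋` points. -/
theorem stmt11 {X : Type*} [MetricSpace X] [DecidableEq X] (C p : ℝ) (hC : 0 < C)
    (hp : 1 ≤ p) (k : ℕ) (hk : 0 < k) (ξ : Fin k → Multiset X) :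
    (∀ (ζ : Multiset X) (z : X), z ∈ ζ →
      ∀ γ : Fin k → Multiset (X × X),
      (∀ j, (γ j).map Prod.fst ≤ ξ j ∧ (γ j).map Prod.snd ≤ ζ ∧
        ((Multiset.card (ξ j) : ℝ) + Multiset.card ζ - 2 * Multiset.card (γ j)) * C ^ p
          + ((γ j).map (fun w => dist w.1 w.2 ^ p)).sum = ttP C p (ξ j) ζ) →
      (Finset.univ.filter (fun j => z ∈ (γ j).map Prod.snd)).card ≤ k / 2 →
      ∑ j, ttP C p (ξ j) (ζ.erase z) ≤ ∑ j, ttP C p (ξ j) ζ) ∧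
    ((∃ ζ₀ : Multiset X, ∀ ζ, ∑ j, ttP C p (ξ j) ζ₀ ≤ ∑ j, ttP C p (ξ j) ζ) →
      ∃ ζs : Multiset X, (∀ ζ, ∑ j, ttP C p (ξ j) ζs ≤ ∑ j, ttP C p (ξ j) ζ) ∧
        Multiset.card ζs ≤ (2 * ∑ j, Multiset.card (ξ j)) / (k + 1)) :=
  stmt11_general C p hC k ξ
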